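/- The function h : R₊³ → R defined by h(a,b,c) = bc if a ≥ b+c (likewise permuting a,b,c) and h(a,b,c) = (ab+bc+ca)/2 − (a²+b²+c²)/4 otherwise, is continuous and non-decreasing in each variable, and satisfies min{ab, bc, ca} ≥ h(a,b,c) ≥ (3/4) min{a,b,c}² for all a,b,c ≥ 0. -/
import Mathlib
set_option maxHeartbeats 2000000


/-- The function `h` of the MA-LBR scheme. -/
noncomputable def hFun (a b c : ℝ) : ℝ :=
  if b + c ≤ a then b * c
  else if c + a ≤ b then c * a
  else if a + b ≤ c then a * b
  else (a * b + b * c + c * a) / 2 - (a ^ 2 + b ^ 2 + c ^ 2) / 4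

/-- Continuous closed form of `hFun` on the nonnegative orthant. -/
noncomputable def hC (a b c : ℝ) : ℝ :=
  (a * b + b * c + c * a) / 2 - (a ^ 2 + b ^ 2 + c ^ 2) / 4 +
    ((max (a - b - c) 0) ^ 2 + (max (b - c - a) 0) ^ 2 + (max (c - a - b) 0) ^ 2) / 4

lemma hFun_eq_hC (a b c : ℝ) (ha : 0 ≤ a) (hb : 0 ≤ b) (hc : 0 ≤ c) :
    hFun a b c = hC a b c := by
  unfold hFun hC
  split_ifs with h1 h2 h3
  · rw [max_eq_left (by linarith), max_eq_right (by linarith), max_eq_right (by linarith)]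
    ring
  · rw [max_eq_right (by linarith), max_eq_left (by linarith), max_eq_right (by linarith)]
    ring
  · rw [max_eq_right (by linarith), max_eq_right (by linarith), max_eq_left (by linarith)]
    ring
  · rw [max_eq_right (by linarith), max_eq_right (by linarith), max_eq_right (by linarith)]
    ring

lemma mono_a (a a' b c : ℝ) (ha : 0 ≤ a) (haa : a ≤ a') (hb : 0 ≤ b) (hc : 0 ≤ c) :
    hFun a b c ≤ hFun a' b c := by
  unfold hFun
  split_ifs <;>
    nlinarith [sq_nonneg (a - b - c), sq_nonneg (a' - b - c), sq_nonneg (a' + b - c),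
      sq_nonneg (a' - b + c), sq_nonneg (a - a'), mul_nonneg hb hc,
      mul_nonneg (mul_nonneg hb hc) (sub_nonneg.2 haa)]

/-- `h` is continuous on `ℝ₊³`, non-decreasing in each variable, and satisfies
`min{ab,bc,ca} ≥ h(a,b,c) ≥ (3/4) min{a,b,c}²`. -/
theorem stmt12_h_properties :
    ContinuousOn (fun p : ℝ × ℝ × ℝ => hFun p.1 p.2.1 p.2.2)
      {p : ℝ × ℝ × ℝ | 0 ≤ p.1 ∧ 0 ≤ p.2.1 ∧ 0 ≤ p.2.2} ∧
    (∀ a a' b c : ℝ, 0 ≤ a → a ≤ a' → 0 ≤ b → 0 ≤ c → hFun a b c ≤ hFun a' b c) ∧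
    (∀ a b b' c : ℝ, 0 ≤ a → 0 ≤ b → b ≤ b' → 0 ≤ c → hFun a b c ≤ hFun a b' c) ∧
    (∀ a b c c' : ℝ, 0 ≤ a → 0 ≤ b → 0 ≤ c → c ≤ c' → hFun a b c ≤ hFun a b c') ∧
    (∀ a b c : ℝ, 0 ≤ a → 0 ≤ b → 0 ≤ c →
      hFun a b c ≤ min (a * b) (min (b * c) (c * a)) ∧
      (3 / 4) * (min a (min b c)) ^ 2 ≤ hFun a b c) := by
  refine ⟨?_, mono_a, ?_, ?_, ?_⟩
  · have hcont : Continuous (fun p : ℝ × ℝ × ℝ => hC p.1 p.2.1 p.2.2) := by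
      unfold hC; fun_prop
    refine ContinuousOn.congr hcont.continuousOn ?_
    intro p hp
    exact hFun_eq_hC _ _ _ hp.1 hp.2.1 hp.2.2
  · intro a b b' c ha hb hbb hc
    unfold hFun
    split_ifs <;>
      nlinarith [sq_nonneg (a - b - c), sq_nonneg (a - b' - c), sq_nonneg (a + b' - c),
        sq_nonneg (a - b' + c), mul_nonneg ha hc,
        mul_nonneg (mul_nonneg ha hc) (sub_nonneg.2 hbb)]
  · intro a b c c' ha hb hc hcc
    unfold hFun
    split_ifs <;>
      nlinarith [sq_nonneg (a - b - c), sq_nonneg (a - b - c'), sq_nonneg (a + b - c'),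
        sq_nonneg (a - b + c'), mul_nonneg ha hb,
        mul_nonneg (mul_nonneg ha hb) (sub_nonneg.2 hcc)]
  · intro a b c ha hb hc
    constructor
    · refine le_min ?_ (le_min ?_ ?_) <;>
        · unfold hFun
          split_ifs <;>
            nlinarith [sq_nonneg (a - b - c), sq_nonneg (b - c - a), sq_nonneg (c - a - b),
              mul_nonneg ha hb, mul_nonneg hb hc, mul_nonneg hc ha]
    · have key : ∀ m : ℝ, 0 ≤ m → m ≤ a → m ≤ b → m ≤ c → (3/4) * m ^ 2 ≤ hFun a b c := by
        intro m hm hma hmb hmc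
        unfold hFun
        split_ifs <;>
          nlinarith [mul_nonneg hm (sub_nonneg.2 hma), mul_nonneg hm (sub_nonneg.2 hmb),
            mul_nonneg hm (sub_nonneg.2 hmc),
            mul_nonneg (sub_nonneg.2 hma) (sub_nonneg.2 hmb),
            mul_nonneg (sub_nonneg.2 hmb) (sub_nonneg.2 hmc),
            mul_nonneg (sub_nonneg.2 hmc) (sub_nonneg.2 hma), sq_nonneg m,
            sq_nonneg (b - c), sq_nonneg (a - b), sq_nonneg (c - a)]
      exact key _ (le_min ha (le_min hb hc)) (min_le_left _ _)
        ((min_le_right _ _).trans (min_le_left _ _))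
        ((min_le_right _ _).trans (min_le_right _ _))
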